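/- arXiv:1811.03965 — 9 statements merged into one kernel-verified Lean document; each statement's English description precedes it below -/
import Mathlib

section
/- Let (N, g, J) be a metallic Riemannian manifold (J² = pJ + qI, g(JX,Y) = g(X,JY)) and let M̃ = ℝ ×_f N be the warped product with metric ⟨,⟩ = dt² + f²g for a positive smooth function f on ℝ. Define ξ = ∂/∂t, η = dt, and φ(X̃) = J(X) where X is the N-component of X̃ = η(X̃)ξ + X. Then (φ, η, ξ, ⟨,⟩) is an almost quadratic metric φ-structure on M̃: φξ = 0, φ² = pφ + q(I − η⊗ξ), ⟨φX̃,Ỹ⟩ = ⟨X̃,φỸ⟩, and ⟨φX̃,φỸ⟩ = p⟨φX̃,Ỹ⟩ + q(⟨X̃,Ỹ⟩ − η(X̃)η(Ỹ)). -/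
/-!
The identity `⟨φX̃,φỸ⟩ = p⟨φX̃,Ỹ⟩ + q(⟨X̃,Ỹ⟩ − η(X̃)η(Ỹ))` follows formally from the other
axioms: move one `φ` across the metric by self-adjointness, expand `φ²` by the quadratic relation,
and use `⟨ξ, Ỹ⟩ = η(Ỹ)`. Those axioms hold componentwise, since `φ` kills the `∂/∂t`-direction
and acts as `J` on the fibre, where the warped factor `f²` only rescales `g`.
-/

namespace LinearMap

variable {A M : Type*} [CommRing A] [AddCommGroup M] [Module A M]

theorem IsAdjointPair.apply_apply_eq_of_sq_eq {B : M →ₗ[A] M →ₗ[A] A} {φ : M → M}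
    (hφ : B.IsAdjointPair B φ φ) {p q : A} {η : M → A} {ξ : M}
    (hsq : ∀ Z, φ (φ Z) = p • φ Z + q • (Z - η Z • ξ)) (hξ : ∀ W, B ξ W = η W) (Z W : M) :
    B (φ Z) (φ W) = p * B (φ Z) W + q * (B Z W - η Z * η W) := by
  rw [← hφ, hsq]
  simp only [map_add, map_smul, map_sub, add_apply, smul_apply, sub_apply, hξ, smul_eq_mul]

variable {V : Type*} [AddCommGroup V] [Module A V]

/-- For `c = f²` this is the warped product metric `dt² + f² g` on `ℝ ×_f N`. -/
def warpedMetric (g : V →ₗ[A] V →ₗ[A] A) (c : A) : A × V →ₗ[A] A × V →ₗ[A] A :=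
  (mul A A).compl₁₂ (fst A A V) (fst A A V) + c • g.compl₁₂ (snd A A V) (snd A A V)

@[simp]
theorem warpedMetric_apply (g : V →ₗ[A] V →ₗ[A] A) (c : A) (Z W : A × V) :
    warpedMetric g c Z W = Z.1 * W.1 + c * g Z.2 W.2 := rfl

theorem isAdjointPair_warpedMetric_prodMap_zero {g : V →ₗ[A] V →ₗ[A] A} {J : V →ₗ[A] V}
    (hJ : g.IsAdjointPair g J J) (c : A) :
    (warpedMetric g c).IsAdjointPair (warpedMetric g c)
      ((0 : A →ₗ[A] A).prodMap J) ((0 : A →ₗ[A] A).prodMap J) := by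
  intro Z W
  simp [hJ Z.2 W.2]

theorem prodMap_zero_apply_apply {J : V →ₗ[A] V} {p q : A}
    (hJ : ∀ X, J (J X) = p • J X + q • X) (Z : A × V) :
    (0 : A →ₗ[A] A).prodMap J ((0 : A →ₗ[A] A).prodMap J Z) =
      p • (0 : A →ₗ[A] A).prodMap J Z + q • (Z - Z.1 • ((1 : A), (0 : V))) := by
  ext <;> simp [hJ]

end LinearMap

open LinearMap in
theorem warped_product_almost_quadratic_metric_structure_general
    {A V : Type*} [CommRing A] [AddCommGroup V] [Module A V]
    (g : V →ₗ[A] V →ₗ[A] A)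
    (J : V →ₗ[A] V) (p q : ℕ)
    (hJ : ∀ X, J (J X) = (p : A) • J X + (q : A) • X)
    (hJcompat : ∀ X Y, g (J X) Y = g X (J Y))
    (f : A)
    (ξ : A × V) (hξ : ξ = (1, 0))
    (η : A × V → A) (hη : ∀ Z, η Z = Z.1)
    (φ : A × V → A × V) (hφ : ∀ Z, φ Z = (0, J Z.2))
    (metric : A × V → A × V → A)
    (hmetric : ∀ Z W, metric Z W = Z.1 * W.1 + f ^ 2 * g Z.2 W.2) :
    φ ξ = 0 ∧
    (∀ Z, φ (φ Z) = (p : A) • φ Z + (q : A) • (Z - η Z • ξ)) ∧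
    (∀ Z W, metric (φ Z) W = metric Z (φ W)) ∧
    (∀ Z W, metric (φ Z) (φ W) =
      (p : A) * metric (φ Z) W + (q : A) * (metric Z W - η Z * η W)) := by
  obtain rfl : φ = ⇑((0 : A →ₗ[A] A).prodMap J) := funext fun Z ↦ by simp [hφ]
  obtain rfl : metric = fun Z W ↦ warpedMetric g (f ^ 2) Z W := funext₂ fun Z W ↦ by simp [hmetric]
  obtain rfl : η = Prod.fst := funext hη
  subst hξ
  have hsq := prodMap_zero_apply_apply hJ
  have hadj := isAdjointPair_warpedMetric_prodMap_zero hJcompat (f ^ 2)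
  exact ⟨by simp, hsq, hadj, hadj.apply_apply_eq_of_sq_eq hsq fun W ↦ by simp⟩

/-- Let `(N,g,J)` be a metallic Riemannian manifold and
`M̃ = ℝ ×_f N` the warped product with metric `⟨,⟩ = dt² + f²g`. Vector fields on `M̃`
are modeled as pairs `X̃ = (η(X̃), X)` with `η(X̃)` a smooth function on `M̃`
(the `∂/∂t`-component) and `X` the `N`-component; `A` is the ring of smooth functions
on `M̃`, `V` the `A`-module of `N`-components of vector fields, with `g` and `J` lifted
to them. With `ξ = ∂/∂t = (1,0)`, `η = dt`, `φX̃ = J(X)`, the data `(φ, η, ξ, ⟨,⟩)`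
is an almost quadratic metric φ-structure on `M̃`: `φξ = 0`,
`φ² = pφ + q(I − η⊗ξ)`, `⟨φX̃,Ỹ⟩ = ⟨X̃,φỸ⟩`, and
`⟨φX̃,φỸ⟩ = p⟨φX̃,Ỹ⟩ + q(⟨X̃,Ỹ⟩ − η(X̃)η(Ỹ))`. -/
theorem warped_product_almost_quadratic_metric_structure
    {A V : Type*} [CommRing A] [AddCommGroup V] [Module A V]
    (g : V →ₗ[A] V →ₗ[A] A)
    (hgsym : ∀ X Y, g X Y = g Y X)
    (J : V →ₗ[A] V) (p q : ℕ) (hp : 0 < p) (hq : 0 < q)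
    (hJ : ∀ X, J (J X) = (p : A) • J X + (q : A) • X)
    (hJcompat : ∀ X Y, g (J X) Y = g X (J Y))
    (f : A) (hf : IsUnit f)
    (ξ : A × V) (hξ : ξ = (1, 0))
    (η : A × V → A) (hη : ∀ Z, η Z = Z.1)
    (φ : A × V → A × V) (hφ : ∀ Z, φ Z = (0, J Z.2))
    (metric : A × V → A × V → A)
    (hmetric : ∀ Z W, metric Z W = Z.1 * W.1 + f ^ 2 * g Z.2 W.2) :
    φ ξ = 0 ∧
    (∀ Z, φ (φ Z) = (p : A) • φ Z + (q : A) • (Z - η Z • ξ)) ∧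
    (∀ Z W, metric (φ Z) W = metric Z (φ W)) ∧
    (∀ Z W, metric (φ Z) (φ W) =
      (p : A) * metric (φ Z) W + (q : A) * (metric Z W - η Z * η W)) :=
  warped_product_almost_quadratic_metric_structure_general g J p q hJ hJcompat f ξ hξ η hη φ hφ
    metric hmetric
end

section
/- On a (β,φ)-Kenmotsu quadratic metric manifold, i.e. an almost quadratic metric φ-manifold satisfying (∇_X φ)Y = β{g(X,φY)ξ + η(Y)φX}, the covariant derivative of ξ satisfies ∇_X ξ = −β(X − η(X)ξ). -/
/-! Put `Y = ξ` in the Kenmotsu identity: since `φξ = 0` and `η(ξ) = 1` it reads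
`φ(∇_X ξ) = -β φX`. Differentiating `g(ξ,ξ) = 1` gives `η(∇_X ξ) = 0`, so the quadratic relation
applied to `∇_X ξ` collapses to `φ²(∇_X ξ) = aφ(∇_X ξ) + b ∇_X ξ`; substituting `φ(∇_X ξ) = -β φX`
and the quadratic relation for `φ²X`, then cancelling `b ≠ 0`, leaves `∇_X ξ = -β(X - η(X)ξ)`. -/

section QuadraticMetric

variable {A V : Type*} [CommRing A] [AddCommGroup V] [Module A V]

theorem metric_nabla_self_eq_zero_of_metric_self_eq_one [Algebra ℝ A] (g : V →ₗ[A] V →ₗ[A] A)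
    (hgsym : ∀ X Y, g X Y = g Y X) (D : V → A → A) (nabla : V → V → V)
    (hD1 : ∀ X, D X 1 = 0)
    (hmetric : ∀ X Y Z, D X (g Y Z) = g (nabla X Y) Z + g Y (nabla X Z))
    {ξ : V} (hξ : g ξ ξ = 1) (X : V) : g (nabla X ξ) ξ = 0 := by
  have htwice : (2 : ℝ) • g (nabla X ξ) ξ = 0 := by
    have h := hmetric X ξ ξ
    rw [hξ, hD1, hgsym ξ] at h
    rw [two_smul, ← h]
  exact (smul_eq_zero.mp htwice).resolve_left two_ne_zero

theorem apply_nabla_eq_neg_smul_of_kenmotsu (g : V →ₗ[A] V →ₗ[A] A) (nabla : V → V → V)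
    (hnablaAdd : ∀ X Y Z, nabla X (Y + Z) = nabla X Y + nabla X Z)
    (φ : V →ₗ[A] V) (ξ : V) (η : V → A) (hφξ : φ ξ = 0) (hηξ : η ξ = 1) (β : A)
    (hKenmotsu : ∀ X Y, nabla X (φ Y) - φ (nabla X Y) = (β * g X (φ Y)) • ξ + (β * η Y) • φ X)
    (X : V) : φ (nabla X ξ) = -(β • φ X) := by
  have hnabla_zero : nabla X 0 = 0 := map_zero (AddMonoidHom.mk' (nabla X) (hnablaAdd X))
  have h := hKenmotsu X ξ
  rw [hφξ, hnabla_zero, hηξ, mul_one, map_zero, mul_zero, zero_smul, zero_add, zero_sub] at h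
  exact neg_eq_iff_eq_neg.mp h

theorem eq_neg_smul_of_apply_eq_neg_smul [Algebra ℝ A] [Module ℝ V] [IsScalarTower ℝ A V]
    (φ : V →ₗ[A] V) (ξ : V) (η : V → A) {a b : ℝ}
    (hb : b ≠ 0) (hφ2 : ∀ X, φ (φ X) = a • φ X + b • (X - η X • ξ)) {β : A} {X Z : V}
    (hηZ : η Z = 0) (hφZ : φ Z = -(β • φ X)) : Z = -(β • (X - η X • ξ)) := by
  have h := hφ2 Z
  rw [hηZ, zero_smul, sub_zero, hφZ, map_neg, map_smul, hφ2 X, smul_add, smul_neg,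
    ← smul_comm a β, ← smul_comm b β, neg_add, add_right_inj] at h
  exact smul_right_injective V hb (show b • Z = b • _ by rw [← h, smul_neg])

end QuadraticMetric

theorem Kenmotsu_quadratic_nabla_xi_general
    {A V : Type*} [CommRing A] [Algebra ℝ A]
    [AddCommGroup V] [Module A V] [Module ℝ V] [IsScalarTower ℝ A V]
    (g : V →ₗ[A] V →ₗ[A] A)
    (hgsym : ∀ X Y, g X Y = g Y X)
    (D : V → A → A)
    (nabla : V → V → V)
    (hnablaAdd : ∀ X Y Z, nabla X (Y + Z) = nabla X Y + nabla X Z)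
    (hD1 : ∀ X, D X 1 = 0)
    (hmetric : ∀ X Y Z, D X (g Y Z) = g (nabla X Y) Z + g Y (nabla X Z))
    (φ : V →ₗ[A] V) (ξ : V) (η : V → A) (a b : ℝ) (hb : b ≠ 0)
    (hη : ∀ X, η X = g X ξ)
    (hφξ : φ ξ = 0) (hηξ : η ξ = 1)
    (hφ2 : ∀ X, φ (φ X) = a • φ X + b • (X - η X • ξ))
    (β : A)
    (hKenmotsu : ∀ X Y, nabla X (φ Y) - φ (nabla X Y) = (β * g X (φ Y)) • ξ + (β * η Y) • φ X) :
    ∀ X, nabla X ξ = -(β • (X - η X • ξ)) := by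
  intro X
  have hξ : g ξ ξ = 1 := (hη ξ).symm.trans hηξ
  have hη_nabla : η (nabla X ξ) = 0 := by
    rw [hη]; exact metric_nabla_self_eq_zero_of_metric_self_eq_one g hgsym D nabla hD1 hmetric hξ X
  exact eq_neg_smul_of_apply_eq_neg_smul φ ξ η hb hφ2 hη_nabla
    (apply_nabla_eq_neg_smul_of_kenmotsu g nabla hnablaAdd φ ξ η hφξ hηξ β hKenmotsu X)

/-- On a `(β,φ)`-Kenmotsu quadratic metric manifold — an almost quadratic
metric φ-manifold (`φξ = 0`, `η(ξ) = 1`, `η = g(·,ξ)`, `φ² = aφ + b(I − η⊗ξ)`, `b ≠ 0`,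
`g(φX,Y) = g(X,φY)`) whose Levi-Civita connection `∇` satisfies
`(∇_X φ)Y = β{g(X,φY)ξ + η(Y)φX}` — one has `∇_X ξ = −β(X − η(X)ξ)`.
Here `A` is the ℝ-algebra of smooth functions, `V` the `A`-module of vector fields,
`D X` is the derivation action of the vector field `X` on functions, and `∇` satisfies
the Levi-Civita axioms (Leibniz rule, metric compatibility). -/
theorem Kenmotsu_quadratic_nabla_xi
    {A V : Type*} [CommRing A] [Algebra ℝ A]
    [AddCommGroup V] [Module A V] [Module ℝ V] [IsScalarTower ℝ A V]
    (g : V →ₗ[A] V →ₗ[A] A)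
    (hgsym : ∀ X Y, g X Y = g Y X)
    (D : V → A → A)
    (nabla : V → V → V)
    (hnablaAdd : ∀ X Y Z, nabla X (Y + Z) = nabla X Y + nabla X Z)
    (hLeibniz : ∀ X (c : A) Y, nabla X (c • Y) = D X c • Y + c • nabla X Y)
    (hD1 : ∀ X, D X 1 = 0)
    (hmetric : ∀ X Y Z, D X (g Y Z) = g (nabla X Y) Z + g Y (nabla X Z))
    (φ : V →ₗ[A] V) (ξ : V) (η : V → A) (a b : ℝ) (hb : b ≠ 0)
    (hη : ∀ X, η X = g X ξ)
    (hφξ : φ ξ = 0) (hηξ : η ξ = 1)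
    (hφ2 : ∀ X, φ (φ X) = a • φ X + b • (X - η X • ξ))
    (hcompat : ∀ X Y, g (φ X) Y = g X (φ Y))
    (β : A)
    (hKenmotsu : ∀ X Y, nabla X (φ Y) - φ (nabla X Y) = (β * g X (φ Y)) • ξ + (β * η Y) • φ X) :
    ∀ X, nabla X ξ = -(β • (X - η X • ξ)) :=
  Kenmotsu_quadratic_nabla_xi_general g hgsym D nabla hnablaAdd hD1 hmetric φ ξ η a b hb hη hφξ hηξ
    hφ2 β hKenmotsu
end

section
/- If (N, g, ∇, J) is a locally metallic Riemannian manifold (∇J = 0), then the warped product ℝ ×_f N with metric dt² + f²g and induced structure (φ, η = dt, ξ = ∂_t) satisfies (∇̃_X̃ φ)Ỹ = −(f'/f){⟨X̃, φỸ⟩ξ + η(Ỹ)φX̃}, i.e. it is a (−f'/f, φ)-Kenmotsu quadratic metric manifold. -/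
/-! Since `∇^N` commutes with `J`, the `N`-part of `∇̃_X̃ (φỸ) − φ(∇̃_X̃ Ỹ)` reduces to the
single warping term `−η(Ỹ)(f'/f) J X`, and its `∂_t`-part to `−f f' g(X, JY)`, which is
`−(f'/f)⟨X̃, φỸ⟩` because `⟨X̃, φỸ⟩ = f² g(X, JY)`. -/

section

variable {A V : Type*} [CommRing A] [AddCommGroup V] [Module A V]

def warpedConnection (g : V →ₗ[A] V →ₗ[A] A) (nablaN : V → V → V) (f f' finv : A)
    (D : A × V → A → A) (Z W : A × V) : A × V :=
  (D Z W.1 - f * f' * g Z.2 W.2,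
   (Z.1 * (f' * finv)) • W.2 + (W.1 * (f' * finv)) • Z.2 + nablaN Z.2 W.2)

theorem warpedConnection_prodMap_sub_prodMap_warpedConnection
    (g : V →ₗ[A] V →ₗ[A] A) (J : V →ₗ[A] V) (nablaN : V → V → V)
    (hJ : ∀ X Y, nablaN X (J Y) = J (nablaN X Y)) (f f' finv : A) (D : A × V → A → A)
    (Z W : A × V) :
    warpedConnection g nablaN f f' finv D Z ((0 : A →ₗ[A] A).prodMap J W) -
        (0 : A →ₗ[A] A).prodMap J (warpedConnection g nablaN f f' finv D Z W) =
      (D Z 0 - f * f' * g Z.2 (J W.2), -(W.1 * (f' * finv)) • J Z.2) := by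
  ext
  · simp [warpedConnection]
  · simp only [warpedConnection, LinearMap.prodMap_apply, LinearMap.zero_apply, Prod.snd_sub, hJ,
      map_add, map_smul, zero_mul, zero_smul]
    module

end

theorem warped_product_is_Kenmotsu_quadratic_general
    {A V : Type*} [CommRing A] [AddCommGroup V] [Module A V]
    (g : V →ₗ[A] V →ₗ[A] A)
    (J : V →ₗ[A] V)
    (nablaN : V → V → V)
    (hlocallymetallic : ∀ X Y, nablaN X (J Y) = J (nablaN X Y))
    (f f' finv : A) (hfinv : f * finv = 1)
    (D : A × V → A → A) (hD0 : ∀ Z, D Z 0 = 0)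
    (ξ : A × V) (hξ : ξ = (1, 0))
    (η : A × V → A) (hη : ∀ Z, η Z = Z.1)
    (φ : A × V → A × V) (hφ : ∀ Z, φ Z = (0, J Z.2))
    (metric : A × V → A × V → A)
    (hmetric : ∀ Z W, metric Z W = Z.1 * W.1 + f ^ 2 * g Z.2 W.2)
    (nablaT : A × V → A × V → A × V)
    (hnablaT : ∀ Z W, nablaT Z W =
      (D Z W.1 - f * f' * g Z.2 W.2,
       (Z.1 * (f' * finv)) • W.2 + (W.1 * (f' * finv)) • Z.2 + nablaN Z.2 W.2)) :
    ∀ Z W, nablaT Z (φ W) - φ (nablaT Z W) =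
      (-(f' * finv)) • ((metric Z (φ W)) • ξ + (η W) • φ Z) := by
  intro Z W
  obtain rfl : nablaT = warpedConnection g nablaN f f' finv D := funext₂ hnablaT
  obtain rfl : φ = (0 : A →ₗ[A] A).prodMap J := funext hφ
  rw [warpedConnection_prodMap_sub_prodMap_warpedConnection g J nablaN hlocallymetallic,
    hD0, hmetric, hη, hξ]
  ext
  · simp only [LinearMap.prodMap_apply, LinearMap.zero_apply, Prod.smul_fst, Prod.fst_add, smul_eq_mul]
    linear_combination (f * f' * g Z.2 (J W.2)) * hfinv
  · simp only [LinearMap.prodMap_apply, Prod.smul_snd, Prod.snd_add, smul_zero, zero_add, smul_smul]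
    module

/-- If `(N, g, ∇, J)` is a locally metallic Riemannian manifold (`∇J = 0`),
then the warped product `ℝ ×_f N` with metric `dt² + f²g` and induced structure
`(φ, η = dt, ξ = ∂_t)` satisfies `(∇̃_X̃ φ)Ỹ = −(f'/f){⟨X̃, φỸ⟩ξ + η(Ỹ)φX̃}`,
i.e. it is a `(−f'/f, φ)`-Kenmotsu quadratic metric manifold.
Vector fields on `ℝ ×_f N` are modeled as pairs `X̃ = (η(X̃), X)`, `A` being the ring
of smooth functions, `V` the `A`-module of `N`-components, `D` the derivation action on
functions; the Levi-Civita connection `∇̃` of the warped metric is given by the O'Neill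
formulas: `∇̃_X̃ Ỹ = (X̃(η(Ỹ)) − f f' g(X,Y), (η(X̃) f'/f)Y + (η(Ỹ) f'/f)X + ∇^N_X Y)`. -/
theorem warped_product_is_Kenmotsu_quadratic
    {A V : Type*} [CommRing A] [AddCommGroup V] [Module A V]
    (g : V →ₗ[A] V →ₗ[A] A)
    (hgsym : ∀ X Y, g X Y = g Y X)
    (J : V →ₗ[A] V) (p q : ℕ) (hp : 0 < p) (hq : 0 < q)
    (hJ : ∀ X, J (J X) = (p : A) • J X + (q : A) • X)
    (hJcompat : ∀ X Y, g (J X) Y = g X (J Y))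
    (nablaN : V → V → V)
    (hlocallymetallic : ∀ X Y, nablaN X (J Y) = J (nablaN X Y))
    (f f' finv : A) (hfinv : f * finv = 1)
    (D : A × V → A → A) (hD0 : ∀ Z, D Z 0 = 0)
    (ξ : A × V) (hξ : ξ = (1, 0))
    (η : A × V → A) (hη : ∀ Z, η Z = Z.1)
    (φ : A × V → A × V) (hφ : ∀ Z, φ Z = (0, J Z.2))
    (metric : A × V → A × V → A)
    (hmetric : ∀ Z W, metric Z W = Z.1 * W.1 + f ^ 2 * g Z.2 W.2)
    (nablaT : A × V → A × V → A × V)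
    (hnablaT : ∀ Z W, nablaT Z W =
      (D Z W.1 - f * f' * g Z.2 W.2,
       (Z.1 * (f' * finv)) • W.2 + (W.1 * (f' * finv)) • Z.2 + nablaN Z.2 W.2)) :
    ∀ Z W, nablaT Z (φ W) - φ (nablaT Z W) =
      (-(f' * finv)) • ((metric Z (φ W)) • ξ + (η W) • φ Z) :=
  warped_product_is_Kenmotsu_quadratic_general g J nablaN hlocallymetallic f f' finv hfinv D hD0 ξ
    hξ η hη φ hφ metric hmetric nablaT hnablaT
end

section
/- Let M be a manifold with an almost quadratic φ-structure (φ,η,ξ) satisfying φ² = pφ + q(I − η⊗ξ). Let h̃ be any Riemannian metric, define h(X,Y) = h̃(φ²X, φ²Y) + η(X)η(Y), and g(X,Y) = (1/(α+δ))[α h(X,Y) + β h(φX,φY) + (γ/2)(h(φX,Y)+h(X,φY)) + δ η(X)η(Y)], where α,β,γ,δ are nonzero constants with βq = pγ/2 + α and α+δ ≠ 0 (and g positive definite). Then g(φX,φY) = p·g(φX,Y) + q·(g(X,Y) − η(X)η(Y)) for all X,Y. -/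
/-! The form `g - η ⊗ η` equals `(α + δ)⁻¹ Q(φ²X, φ²Y)` with
`Q = α h̃ + β h̃(φ·, φ·) + (γ/2)(h̃(φ·, ·) + h̃(·, φ·))`, and `φ²X, φ²Y` lie in the range of `φ`,
on which `φ² = pφ + q`. Expanding `Q(φu, φv) - p Q(φu, v) - q Q(u, v)` with this relation in
both arguments leaves `βq - α - pγ/2` times a bilinear expression in `u, v`. -/

namespace AlmostQuadratic

variable {R M : Type*} [CommRing R] [AddCommGroup M] [Module R M]

def associatedForm (B : LinearMap.BilinForm R M) (ψ : M →ₗ[R] M) (α β c : R) (u v : M) : R :=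
  α * B u v + β * B (ψ u) (ψ v) + c * (B (ψ u) v + B u (ψ v))

theorem associatedForm_map_map (B : LinearMap.BilinForm R M) (ψ : M →ₗ[R] M)
    {p q α β c : R} (hconst : β * q = p * c + α) {u v : M}
    (hu : ψ (ψ u) = p • ψ u + q • u) (hv : ψ (ψ v) = p • ψ v + q • v) :
    associatedForm B ψ α β c (ψ u) (ψ v) =
      p * associatedForm B ψ α β c (ψ u) v + q * associatedForm B ψ α β c u v := by
  simp only [associatedForm, hu, hv, map_add, map_smul, LinearMap.add_apply,
    LinearMap.smul_apply, smul_eq_mul]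
  linear_combination (q * B u v + p * B (ψ u) v - B (ψ u) (ψ v)) * hconst

theorem apply_apply_apply {φ : M →ₗ[R] M} {η : M →ₗ[R] R} {ξ : M} {p q : R}
    (hηφ : ∀ X, η (φ X) = 0) (hφ2 : ∀ X, φ (φ X) = p • φ X + q • (X - η X • ξ)) (w : M) :
    φ (φ (φ w)) = p • φ (φ w) + q • φ w := by
  rw [hφ2, hηφ, zero_smul, sub_zero]

end AlmostQuadratic

open AlmostQuadratic in
theorem associated_metric_exists_general
    {V : Type*} [AddCommGroup V] [Module ℝ V]
    (htilde : V →ₗ[ℝ] V →ₗ[ℝ] ℝ)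
    (φ : V →ₗ[ℝ] V) (η : V →ₗ[ℝ] ℝ) (ξ : V) (p q : ℝ)
    (hηφ : ∀ X, η (φ X) = 0)
    (hφ2 : ∀ X, φ (φ X) = p • φ X + q • (X - η X • ξ))
    (α β γ δ : ℝ)
    (hconst : β * q = p * (γ / 2) + α) (hαδ : α + δ ≠ 0)
    (h : V → V → ℝ)
    (hh : ∀ X Y, h X Y = htilde (φ (φ X)) (φ (φ Y)) + η X * η Y)
    (g : V → V → ℝ)
    (hg : ∀ X Y, g X Y = (1 / (α + δ)) *
      (α * h X Y + β * h (φ X) (φ Y) + (γ / 2) * (h (φ X) Y + h X (φ Y)) + δ * (η X * η Y))) :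
    ∀ X Y, g (φ X) (φ Y) = p * g (φ X) Y + q * (g X Y - η X * η Y) := by
  have hg_eq : ∀ X Y, g X Y = (α + δ)⁻¹ *
      associatedForm htilde φ α β (γ / 2) (φ (φ X)) (φ (φ Y)) + η X * η Y := by
    intro X Y
    rw [hg, hh, hh, hh, hh, hηφ, hηφ, associatedForm]
    field_simp
    ring
  intro X Y
  rw [hg_eq, hg_eq, hg_eq, hηφ, associatedForm_map_map htilde φ hconst
    (apply_apply_apply hηφ hφ2 (φ X)) (apply_apply_apply hηφ hφ2 (φ Y))]
  ring

/-- Every manifold with an almost quadratic φ-structure `(φ,η,ξ)`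
(`φξ = 0`, `η(ξ) = 1`, `η∘φ = 0`, `φ² = pφ + q(I − η⊗ξ)`, `q ≠ 0`) admits an associated
Riemannian metric: for any Riemannian metric `h̃`, setting
`h(X,Y) = h̃(φ²X, φ²Y) + η(X)η(Y)` and
`g(X,Y) = (1/(α+δ))[α h(X,Y) + β h(φX,φY) + (γ/2)(h(φX,Y)+h(X,φY)) + δ η(X)η(Y)]`
with nonzero constants `α,β,γ,δ` satisfying `βq = pγ/2 + α`, `α+δ ≠ 0` (and `g`
positive definite), one gets `g(φX,φY) = p·g(φX,Y) + q·(g(X,Y) − η(X)η(Y))`. -/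
theorem associated_metric_exists
    {V : Type*} [AddCommGroup V] [Module ℝ V]
    (htilde : V →ₗ[ℝ] V →ₗ[ℝ] ℝ)
    (hhsym : ∀ X Y, htilde X Y = htilde Y X)
    (hhpos : ∀ X, X ≠ 0 → 0 < htilde X X)
    (φ : V →ₗ[ℝ] V) (η : V →ₗ[ℝ] ℝ) (ξ : V) (p q : ℝ) (hq : q ≠ 0)
    (hφξ : φ ξ = 0) (hηξ : η ξ = 1) (hηφ : ∀ X, η (φ X) = 0)
    (hφ2 : ∀ X, φ (φ X) = p • φ X + q • (X - η X • ξ))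
    (α β γ δ : ℝ) (hα : α ≠ 0) (hβ : β ≠ 0) (hγ : γ ≠ 0) (hδ : δ ≠ 0)
    (hconst : β * q = p * (γ / 2) + α) (hαδ : α + δ ≠ 0)
    (h : V → V → ℝ)
    (hh : ∀ X Y, h X Y = htilde (φ (φ X)) (φ (φ Y)) + η X * η Y)
    (g : V → V → ℝ)
    (hg : ∀ X Y, g X Y = (1 / (α + δ)) *
      (α * h X Y + β * h (φ X) (φ Y) + (γ / 2) * (h (φ X) Y + h X (φ Y)) + δ * (η X * η Y)))
    (hgpos : ∀ X, X ≠ 0 → 0 < g X X) :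
    ∀ X Y, g (φ X) (φ Y) = p * g (φ X) Y + q * (g X Y - η X * η Y) :=
  associated_metric_exists_general htilde φ η ξ p q hηφ hφ2 α β γ δ hconst hαδ h hh g hg
end

section
/- On a (β,φ)-Kenmotsu quadratic metric manifold (M,g,∇,φ,ξ,η), the Nijenhuis torsion of φ vanishes identically: N_φ(X,Y) = φ²[X,Y] + [φX,φY] − φ[φX,Y] − φ[X,φY] = 0 for all vector fields X,Y. -/
/-!
For a torsion-free connection the Nijenhuis torsion of `φ` is expressed through `∇φ`:
`N_φ(X,Y) = (∇_{φX}φ)Y − (∇_{φY}φ)X − φ(∇_Xφ)Y + φ(∇_Yφ)X`.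
Inserting the Kenmotsu formula `(∇_Xφ)Y = β{g(X,φY)ξ + η(Y)φX}`, the `ξ`-terms
`β g(φX,φY)ξ − β g(φY,φX)ξ` cancel by symmetry of `g`, the terms `φ(g(·,·)ξ)` vanish since
`φξ = 0`, and the remaining `β η(·) φ²(·)` terms cancel in pairs.
-/

namespace AlmostQuadraticMetric

variable {A V F : Type*}

/-- `covDeriv nabla φ X Y` is `(∇_X φ) Y`. -/
def covDeriv [Sub V] (nabla : V → V → V) (φ : V → V) (X Y : V) : V :=
  nabla X (φ Y) - φ (nabla X Y)

def nijenhuisTorsion [AddCommGroup V] (bracket : V → V → V) (φ : V → V) (X Y : V) : V :=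
  φ (φ (bracket X Y)) + bracket (φ X) (φ Y) - φ (bracket (φ X) Y) - φ (bracket X (φ Y))

section

variable [AddCommGroup V] [FunLike F V V] [AddMonoidHomClass F V V]

theorem nijenhuisTorsion_eq_covDeriv {bracket nabla : V → V → V}
    (htorsionfree : ∀ X Y, nabla X Y - nabla Y X = bracket X Y) (φ : F) (X Y : V) :
    nijenhuisTorsion bracket φ X Y =
      covDeriv nabla φ (φ X) Y - covDeriv nabla φ (φ Y) X
        - φ (covDeriv nabla φ X Y) + φ (covDeriv nabla φ Y X) := by
  simp only [nijenhuisTorsion, covDeriv, ← htorsionfree, map_sub]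
  abel

end

theorem covDeriv_combination_eq_zero_of_kenmotsu [CommRing A] [AddCommGroup V] [Module A V]
    {nabla : V → V → V} {g : V →ₗ[A] V →ₗ[A] A} (hgsym : ∀ X Y, g X Y = g Y X)
    {φ : V →ₗ[A] V} {ξ : V} {η : V → A} {β : A} (hφξ : φ ξ = 0)
    (hKenmotsu : ∀ X Y, covDeriv nabla φ X Y = (β * g X (φ Y)) • ξ + (β * η Y) • φ X)
    (X Y : V) :
    covDeriv nabla φ (φ X) Y - covDeriv nabla φ (φ Y) X
      - φ (covDeriv nabla φ X Y) + φ (covDeriv nabla φ Y X) = 0 := by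
  simp only [hKenmotsu, map_add, map_smul, hφξ, smul_zero, zero_add, hgsym (φ Y) (φ X)]
  abel

end AlmostQuadraticMetric

open AlmostQuadraticMetric in
theorem Kenmotsu_quadratic_Nijenhuis_vanishes_general
    {A V : Type*} [CommRing A]
    [AddCommGroup V] [Module A V]
    (g : V →ₗ[A] V →ₗ[A] A)
    (hgsym : ∀ X Y, g X Y = g Y X)
    (bracket : V → V → V)
    (nabla : V → V → V)
    (htorsionfree : ∀ X Y, nabla X Y - nabla Y X = bracket X Y)
    (φ : V →ₗ[A] V) (ξ : V) (η : V → A)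
    (hφξ : φ ξ = 0)
    (β : A)
    (hKenmotsu : ∀ X Y, nabla X (φ Y) - φ (nabla X Y) = (β * g X (φ Y)) • ξ + (β * η Y) • φ X) :
    ∀ X Y, φ (φ (bracket X Y)) + bracket (φ X) (φ Y)
        - φ (bracket (φ X) Y) - φ (bracket X (φ Y)) = 0 := by
  intro X Y
  rw [← nijenhuisTorsion, nijenhuisTorsion_eq_covDeriv htorsionfree]
  exact covDeriv_combination_eq_zero_of_kenmotsu hgsym hφξ hKenmotsu X Y

/-- On a `(β,φ)`-Kenmotsu quadratic metric manifold `(M,g,∇,φ,ξ,η)`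
(`φξ = 0`, `η(ξ) = 1`, `η = g(·,ξ)`, `φ² = pφ + q(I − η⊗ξ)`, `g(φX,Y) = g(X,φY)`,
`(∇_X φ)Y = β{g(X,φY)ξ + η(Y)φX}`, hence `∇_X ξ = −β(X−η(X)ξ)` and `dη = 0`),
the Nijenhuis torsion of `φ` vanishes identically:
`N_φ(X,Y) = φ²[X,Y] + [φX,φY] − φ[φX,Y] − φ[X,φY] = 0`. -/
theorem Kenmotsu_quadratic_Nijenhuis_vanishes
    {A V : Type*} [CommRing A] [Algebra ℝ A]
    [AddCommGroup V] [Module A V] [Module ℝ V] [IsScalarTower ℝ A V]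
    (g : V →ₗ[A] V →ₗ[A] A)
    (hgsym : ∀ X Y, g X Y = g Y X)
    (D : V → A → A)
    (bracket : V → V → V)
    (nabla : V → V → V)
    (hnablaAdd : ∀ X Y Z, nabla X (Y + Z) = nabla X Y + nabla X Z)
    (hLeibniz : ∀ X (c : A) Y, nabla X (c • Y) = D X c • Y + c • nabla X Y)
    (hD1 : ∀ X, D X 1 = 0)
    (hmetric : ∀ X Y Z, D X (g Y Z) = g (nabla X Y) Z + g Y (nabla X Z))
    (htorsionfree : ∀ X Y, nabla X Y - nabla Y X = bracket X Y)
    (φ : V →ₗ[A] V) (ξ : V) (η : V → A) (p q : ℝ) (hq : q ≠ 0)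
    (hη : ∀ X, η X = g X ξ)
    (hφξ : φ ξ = 0) (hηξ : η ξ = 1)
    (hφ2 : ∀ X, φ (φ X) = p • φ X + q • (X - η X • ξ))
    (hcompat : ∀ X Y, g (φ X) Y = g X (φ Y))
    (β : A)
    (hKenmotsu : ∀ X Y, nabla X (φ Y) - φ (nabla X Y) = (β * g X (φ Y)) • ξ + (β * η Y) • φ X)
    (hnablaXi : ∀ X, nabla X ξ = -(β • (X - η X • ξ))) :
    ∀ X Y, φ (φ (bracket X Y)) + bracket (φ X) (φ Y)
        - φ (bracket (φ X) Y) - φ (bracket X (φ Y)) = 0 :=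
  Kenmotsu_quadratic_Nijenhuis_vanishes_general g hgsym bracket nabla htorsionfree φ ξ η hφξ β
    hKenmotsu
end

section
/- Let M^n be a hypersurface of a manifold M̃^{n+1} with metallic structure J (J² = pJ + qI), with unit normal ν, and suppose the decompositions JX = φX + η(X)ν for tangent X, Jν = qξ + pν, and Jξ = ν hold, where ξ is tangent, η(ξ) = 1, η∘φ = 0. Then φ²X = pφX + q(X − η(X)ξ) for all tangent X, so (φ,η,ξ) is an almost quadratic φ-structure on M^n. -/
/-! Apply `J` to `J(iX) = i(φX) + η(X)ν`: by `η ∘ φ = 0` and the formula for `Jν`, the tangential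
part of `J²(iX)` is `i(φ²X) + q η(X) iξ`, while `J² = pJ + q` gives `p i(φX) + q iX` for it. The
normal parts agree, and injectivity of `i` yields the identity in `V`. -/

theorem LinearMap.map_comp_self_eq_of_decomposition {R V W : Type*} [CommRing R]
    [AddCommGroup V] [Module R V] [AddCommGroup W] [Module R W]
    (i : V →ₗ[R] W) (J : W →ₗ[R] W) (p q : R) (hJ : ∀ w, J (J w) = p • J w + q • w)
    (ν : W) (φ : V →ₗ[R] V) (η : V →ₗ[R] R) (ξ : V)
    (hdec : ∀ X, J (i X) = i (φ X) + η X • ν) (hJν : J ν = q • i ξ + p • ν)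
    (hηφ : ∀ X, η (φ X) = 0) (X : V) :
    i (φ (φ X)) = i (p • φ X + q • (X - η X • ξ)) := by
  have via_decomposition : J (J (i X)) = i (φ (φ X)) + (q * η X) • i ξ + (p * η X) • ν := by
    rw [hdec, map_add, hdec, map_smul, hJν, hηφ]
    module
  have via_structure : J (J (i X)) = p • i (φ X) + (p * η X) • ν + q • i X := by
    rw [hJ, hdec]
    module
  have tangential : i (φ (φ X)) = p • i (φ X) + q • i X - (q * η X) • i ξ := by
    linear_combination (norm := module) via_decomposition.symm.trans via_structure
  rw [tangential]
  simp only [map_add, map_smul, map_sub]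
  module

theorem hypersurface_quadratic_structure_general
    {V W : Type*} [AddCommGroup V] [Module ℝ V] [AddCommGroup W] [Module ℝ W]
    (i : V →ₗ[ℝ] W) (hi : Function.Injective i)
    (J : W →ₗ[ℝ] W) (p q : ℕ)
    (hJ : ∀ w, J (J w) = (p : ℝ) • J w + (q : ℝ) • w)
    (ν : W)
    (φ : V →ₗ[ℝ] V) (η : V →ₗ[ℝ] ℝ) (ξ : V)
    (hdec : ∀ X, J (i X) = i (φ X) + η X • ν)
    (hJν : J ν = (q : ℝ) • i ξ + (p : ℝ) • ν)
    (hηφ : ∀ X, η (φ X) = 0) :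
    ∀ X, φ (φ X) = (p : ℝ) • φ X + (q : ℝ) • (X - η X • ξ) := fun X =>
  hi (i.map_comp_self_eq_of_decomposition J p q hJ ν φ η ξ hdec hJν hηφ X)

/-- Let `M^n` be a hypersurface (tangent bundle modeled by `V`, included in
the ambient tangent bundle `W` via the injective map `i`, with unit normal `ν ∉ i(V)`)
of a manifold `M̃^{n+1}` with metallic structure `J` (`J² = pJ + qI`). If the
decompositions `J(iX) = i(φX) + η(X)ν`, `Jν = q·iξ + pν`, `J(iξ) = ν` hold with `ξ`
tangent, `η(ξ) = 1`, `η∘φ = 0`, then `φ²X = pφX + q(X − η(X)ξ)` for all tangent `X`,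
i.e. `(φ,η,ξ)` is an almost quadratic φ-structure on `M^n`. -/
theorem hypersurface_quadratic_structure
    {V W : Type*} [AddCommGroup V] [Module ℝ V] [AddCommGroup W] [Module ℝ W]
    (i : V →ₗ[ℝ] W) (hi : Function.Injective i)
    (J : W →ₗ[ℝ] W) (p q : ℕ) (hp : 0 < p) (hq : 0 < q)
    (hJ : ∀ w, J (J w) = (p : ℝ) • J w + (q : ℝ) • w)
    (ν : W) (hν : ν ∉ LinearMap.range i)
    (φ : V →ₗ[ℝ] V) (η : V →ₗ[ℝ] ℝ) (ξ : V)
    (hdec : ∀ X, J (i X) = i (φ X) + η X • ν)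
    (hJν : J ν = (q : ℝ) • i ξ + (p : ℝ) • ν)
    (hJξ : J (i ξ) = ν)
    (hηξ : η ξ = 1) (hηφ : ∀ X, η (φ X) = 0) :
    ∀ X, φ (φ X) = (p : ℝ) • φ X + (q : ℝ) • (X - η X • ξ) :=
  hypersurface_quadratic_structure_general i hi J p q hJ ν φ η ξ hdec hJν hηφ
end

section
/- Let (M^n, g, ∇, φ, η, ξ) be a quadratic metric φ-hypersurface of a locally metallic Riemannian manifold, with shape operator A satisfying A ξ = 0 and ∇_X ξ = pAX − φAX. Then the characteristic vector field ξ is Killing if and only if φA + Aφ = 2pA. -/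
/-!
Since `φ` and `A` are `g`-symmetric, `∇ξ = pA − φA` has `g`-adjoint `pA − Aφ`. The Killing
condition says that `∇ξ` is skew-adjoint, i.e. (by nondegeneracy of `g`) that `∇ξ` plus its
adjoint, `2pA − (φA + Aφ)`, vanishes.
-/

open LinearMap

theorem forall_apply_add_apply_swap_eq_zero_iff {R M : Type*} [CommRing R] [AddCommGroup M]
    [Module R M] {g : M →ₗ[R] M →ₗ[R] R} (hsym : ∀ x y, g x y = g y x)
    (hsep : g.SeparatingLeft) {T T' : M → M} (hT : IsAdjointPair g g T T') :
    (∀ y z, g (T y) z + g (T z) y = 0) ↔ T + T' = 0 := by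
  have hsum : ∀ y z, g (T y) z + g (T z) y = g ((T + T') y) z := fun y z => by
    rw [hT z y, hsym z, Pi.add_apply, map_add₂]
  simp only [hsum, funext_iff, Pi.zero_apply]
  exact ⟨fun h y => hsep _ (h y), fun h y z => by rw [h, map_zero₂]⟩

theorem xi_Killing_iff_general
    {A V : Type*} [CommRing A] [AddCommGroup V] [Module A V]
    (g : V →ₗ[A] V →ₗ[A] A)
    (hgsym : ∀ X Y, g X Y = g Y X)
    (hgnondeg : ∀ X : V, (∀ Y, g X Y = 0) → X = 0)
    (nabla : V → V → V)
    (φ : V →ₗ[A] V) (ξ : V) (p : ℕ)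
    (hφsym : ∀ X Y, g (φ X) Y = g X (φ Y))
    (S : V →ₗ[A] V)
    (hSsym : ∀ X Y, g (S X) Y = g X (S Y))
    (hnablaXi : ∀ X, nabla X ξ = (p : A) • S X - φ (S X)) :
    (∀ Y Z, g (nabla Y ξ) Z + g (nabla Z ξ) Y = 0) ↔
    (∀ X, φ (S X) + S (φ X) = (2 * (p : A)) • S X) := by
  have hadj : IsAdjointPair g g (nabla · ξ) ((p : A) • ⇑S - ⇑S ∘ ⇑φ) := by
    rw [show (nabla · ξ) = (p : A) • ⇑S - ⇑φ ∘ ⇑S from funext hnablaXi]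
    have hS : IsAdjointPair g g S S := hSsym
    exact (hS.smul _).sub (hS.comp hφsym)
  rw [forall_apply_add_apply_swap_eq_zero_iff hgsym hgnondeg hadj, funext_iff]
  refine forall_congr' fun X => ?_
  have hexpand : ((nabla · ξ) + ((p : A) • ⇑S - ⇑S ∘ ⇑φ)) X
      = (2 * (p : A)) • S X - (φ (S X) + S (φ X)) := by
    simp only [Pi.add_apply, Pi.sub_apply, Pi.smul_apply, Function.comp_apply, hnablaXi]
    module
  rw [hexpand, Pi.zero_apply, sub_eq_zero, eq_comm]

/-- Let `(M^n, g, ∇, φ, η, ξ)` be a quadratic metric φ-hypersurface of a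
locally metallic Riemannian manifold, with (symmetric) shape operator `A` satisfying
`Aξ = 0` and `∇_X ξ = pAX − φAX`. Then the characteristic vector field `ξ` is a Killing
vector field (`g(∇_Y ξ, Z) + g(∇_Z ξ, Y) = 0` for all `Y,Z`) if and only if
`φA + Aφ = 2pA`. -/
theorem xi_Killing_iff
    {A V : Type*} [CommRing A] [AddCommGroup V] [Module A V]
    (g : V →ₗ[A] V →ₗ[A] A)
    (hgsym : ∀ X Y, g X Y = g Y X)
    (hgnondeg : ∀ X : V, (∀ Y, g X Y = 0) → X = 0)
    (nabla : V → V → V)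
    (φ : V →ₗ[A] V) (ξ : V) (η : V → A) (p q : ℕ) (hp : 0 < p) (hq : 0 < q)
    (hη : ∀ X, η X = g X ξ)
    (hφξ : φ ξ = 0) (hηξ : η ξ = 1)
    (hφ2 : ∀ X, φ (φ X) = (p : A) • φ X + (q : A) • (X - η X • ξ))
    (hφsym : ∀ X Y, g (φ X) Y = g X (φ Y))
    (S : V →ₗ[A] V)
    (hSsym : ∀ X Y, g (S X) Y = g X (S Y))
    (hSξ : S ξ = 0)
    (hnablaXi : ∀ X, nabla X ξ = (p : A) • S X - φ (S X)) :
    (∀ Y Z, g (nabla Y ξ) Z + g (nabla Z ξ) Y = 0) ↔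
    (∀ X, φ (S X) + S (φ X) = (2 * (p : A)) • S X) :=
  xi_Killing_iff_general g hgsym hgnondeg nabla φ ξ p hφsym S hSsym hnablaXi
end

section
/- Let (M^n, g, ∇, φ, ξ, η) be a (β,φ)-Kenmotsu quadratic hypersurface of a locally metallic Riemannian manifold, with shape operator A satisfying (∇_X φ)Y = η(Y)AX + g(AX,Y)ξ, ∇_X ξ = pAX − φAX, Aξ = 0, and φ² = pφ + (I − η⊗ξ). Then A = βφ, φA = Aφ, and A² = βpA + β²(I − η⊗ξ). -/
/-!
Evaluating both expressions for `(∇_X φ)ξ` at `Y = ξ`: the Gauss-type equation gives `S X` (`S` the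
shape operator), since `η ξ = 1` and `g (S X) ξ = g X (S ξ) = 0`, while the Kenmotsu equation
gives `β φ X`, since `φ ξ = 0`. So `S = β φ`, which commutes with `φ`, and
squaring it via `φ² = p φ + (I − η ⊗ ξ)` gives the quadratic relation.
-/

section

variable {R V : Type*} [CommRing R] [AddCommGroup V] [Module R V]

theorem shape_eq_smul_of_gauss_of_kenmotsu
    (g : V →ₗ[R] V →ₗ[R] R) (nabla : V → V → V) (φ S : V →ₗ[R] V) (ξ : V) (η : V → R) (β : R)
    (hφξ : φ ξ = 0) (hηξ : η ξ = 1)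
    (hSsym : ∀ X Y, g (S X) Y = g X (S Y)) (hSξ : S ξ = 0)
    (hGauss : ∀ X Y, nabla X (φ Y) - φ (nabla X Y) = η Y • S X + g (S X) Y • ξ)
    (hKenmotsu : ∀ X Y, nabla X (φ Y) - φ (nabla X Y) = (β * g X (φ Y)) • ξ + (β * η Y) • φ X)
    (X : V) : S X = β • φ X := by
  have h := (hGauss X ξ).symm.trans (hKenmotsu X ξ)
  rw [hηξ, hφξ, hSsym, hSξ, map_zero] at h
  simpa using h

theorem commute_of_eq_smul {φ S : V →ₗ[R] V} {β : R} (hS : ∀ X, S X = β • φ X) (X : V) :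
    φ (S X) = S (φ X) := by
  rw [hS, hS, map_smul]

theorem sq_eq_of_eq_smul {φ S : V →ₗ[R] V} {β a : R} {P : V → V}
    (hφ2 : ∀ X, φ (φ X) = a • φ X + P X) (hS : ∀ X, S X = β • φ X) (X : V) :
    S (S X) = (β * a) • S X + (β * β) • P X := by
  rw [hS, hS X, map_smul, smul_smul, hφ2, smul_add, smul_smul, smul_smul, mul_right_comm β a β]

end

theorem Kenmotsu_quadratic_hypersurface_shape_operator_general
    {A V : Type*} [CommRing A] [AddCommGroup V] [Module A V]
    (g : V →ₗ[A] V →ₗ[A] A)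
    (nabla : V → V → V)
    (φ : V →ₗ[A] V) (ξ : V) (η : V → A) (p : ℕ)
    (hφξ : φ ξ = 0) (hηξ : η ξ = 1)
    (hφ2 : ∀ X, φ (φ X) = (p : A) • φ X + (X - η X • ξ))
    (S : V →ₗ[A] V)
    (hSsym : ∀ X Y, g (S X) Y = g X (S Y))
    (hSξ : S ξ = 0)
    (hGauss : ∀ X Y, nabla X (φ Y) - φ (nabla X Y) = η Y • S X + g (S X) Y • ξ)
    (β : A)
    (hKenmotsu : ∀ X Y, nabla X (φ Y) - φ (nabla X Y) = (β * g X (φ Y)) • ξ + (β * η Y) • φ X) :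
    (∀ X, S X = β • φ X) ∧
    (∀ X, φ (S X) = S (φ X)) ∧
    (∀ X, S (S X) = (β * (p : A)) • S X + (β * β) • (X - η X • ξ)) := by
  have hS := shape_eq_smul_of_gauss_of_kenmotsu g nabla φ S ξ η β hφξ hηξ hSsym hSξ hGauss
    hKenmotsu
  exact ⟨hS, commute_of_eq_smul hS, sq_eq_of_eq_smul hφ2 hS⟩

/-- Let `(M^n, g, ∇, φ, ξ, η)` be a `(β,φ)`-Kenmotsu quadratic hypersurface
of a locally metallic Riemannian manifold, with shape operator `A` satisfying
`(∇_X φ)Y = η(Y)AX + g(AX,Y)ξ`, `∇_X ξ = pAX − φAX`, `Aξ = 0` and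
`φ² = pφ + (I − η⊗ξ)` (the hypersurface case `q = 1`). Then `A = βφ`, `φA = Aφ` and
`A² = βpA + β²(I − η⊗ξ)`. -/
theorem Kenmotsu_quadratic_hypersurface_shape_operator
    {A V : Type*} [CommRing A] [AddCommGroup V] [Module A V]
    (g : V →ₗ[A] V →ₗ[A] A)
    (hgsym : ∀ X Y, g X Y = g Y X)
    (hgnondeg : ∀ X : V, (∀ Y, g X Y = 0) → X = 0)
    (nabla : V → V → V)
    (φ : V →ₗ[A] V) (ξ : V) (η : V → A) (p : ℕ) (hp : 0 < p)
    (hη : ∀ X, η X = g X ξ)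
    (hφξ : φ ξ = 0) (hηξ : η ξ = 1)
    (hφ2 : ∀ X, φ (φ X) = (p : A) • φ X + (X - η X • ξ))
    (hφsym : ∀ X Y, g (φ X) Y = g X (φ Y))
    (S : V →ₗ[A] V)
    (hSsym : ∀ X Y, g (S X) Y = g X (S Y))
    (hSξ : S ξ = 0)
    (hnablaXi : ∀ X, nabla X ξ = (p : A) • S X - φ (S X))
    (hGauss : ∀ X Y, nabla X (φ Y) - φ (nabla X Y) = η Y • S X + g (S X) Y • ξ)
    (β : A)
    (hKenmotsu : ∀ X Y, nabla X (φ Y) - φ (nabla X Y) = (β * g X (φ Y)) • ξ + (β * η Y) • φ X)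
    (hdη : ∀ X Y, g Y (nabla X ξ) - g X (nabla Y ξ) = 0) :
    (∀ X, S X = β • φ X) ∧
    (∀ X, φ (S X) = S (φ X)) ∧
    (∀ X, S (S X) = (β * (p : A)) • S X + (β * β) • (X - η X • ξ)) :=
  Kenmotsu_quadratic_hypersurface_shape_operator_general g nabla φ ξ η p hφξ hηξ hφ2 S hSsym hSξ
    hGauss β hKenmotsu
end

section
/- Let (M^n, g, ∇, φ, ξ) be a quadratic metric φ-hypersurface of a locally metallic Riemannian manifold, with ∇_X ξ = pAX − φAX, Aξ = 0, and (∇_X φ)Y = η(Y)AX + g(AX,Y)ξ. Then the Riemannian curvature tensor satisfies R(X,Y)ξ = p((∇_X A)Y − (∇_Y A)X) − φ((∇_X A)Y − (∇_Y A)X) for all tangent X,Y. In particular, if the second fundamental form is parallel (∇A = 0), then R(X,Y)ξ = 0. -/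
/-!
Write `S` for the shape operator. Since `∇ξ = T` with `T = pS − φS`, torsion-freeness gives
`R(X,Y)ξ = (∇_X T)Y − (∇_Y T)X`. As `Sξ = 0` and `S` is symmetric, `η ∘ S = 0`, so the formula
for `∇φ` yields `(∇_X T)Y = p (∇_X S)Y − φ (∇_X S)Y − g(SX, SY) ξ`; the `ξ`-terms cancel in the
antisymmetrization because `g(SX, SY)` is symmetric in `X, Y`.
-/

section

variable {A V : Type*} [CommRing A] [AddCommGroup V] [Module A V]

theorem apply_shape_xi_eq_zero (g : V →ₗ[A] V →ₗ[A] A) (S : V →ₗ[A] V) (ξ : V)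
    (hSsym : ∀ X Y, g (S X) Y = g X (S Y)) (hSξ : S ξ = 0) (X : V) : g (S X) ξ = 0 := by
  rw [hSsym, hSξ, map_zero]

theorem curvature_apply_eq_of_nabla_eq (nabla bracket : V → V → V) (R : V → V → V → V)
    (htorsionfree : ∀ X Y, nabla X Y - nabla Y X = bracket X Y)
    (hR : ∀ X Y Z, R X Y Z =
      nabla X (nabla Y Z) - nabla Y (nabla X Z) - nabla (bracket X Y) Z)
    (T : V →+ V) (ξ : V) (hT : ∀ X, nabla X ξ = T X) (X Y : V) :
    R X Y ξ = (nabla X (T Y) - T (nabla X Y)) - (nabla Y (T X) - T (nabla Y X)) := by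
  rw [hR, hT, hT, hT, ← htorsionfree, map_sub]
  abel

theorem nabla_phi_shape_eq (nabla : V → V → V) (g : V →ₗ[A] V →ₗ[A] A) (φ S : V →ₗ[A] V)
    (ξ : V) (η : V → A) (hη : ∀ X, η X = g X ξ)
    (hSsym : ∀ X Y, g (S X) Y = g X (S Y)) (hSξ : S ξ = 0)
    (hGauss : ∀ X Y, nabla X (φ Y) - φ (nabla X Y) = η Y • S X + g (S X) Y • ξ) (X Y : V) :
    nabla X (φ (S Y)) = φ (nabla X (S Y)) + g (S X) (S Y) • ξ := by
  have h := hGauss X (S Y)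
  rw [hη, apply_shape_xi_eq_zero g S ξ hSsym hSξ, zero_smul, zero_add] at h
  exact sub_eq_iff_eq_add'.mp h

theorem nabla_metallic_shape_sub_eq (nabla : V → V → V)
    (hnablaSub : ∀ X Y Z, nabla X (Y - Z) = nabla X Y - nabla X Z)
    (g : V →ₗ[A] V →ₗ[A] A) (φ S : V →ₗ[A] V) (ξ : V) (η : V → A) (p : ℕ)
    (hη : ∀ X, η X = g X ξ) (hSsym : ∀ X Y, g (S X) Y = g X (S Y)) (hSξ : S ξ = 0)
    (hGauss : ∀ X Y, nabla X (φ Y) - φ (nabla X Y) = η Y • S X + g (S X) Y • ξ) (X Y : V) :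
    nabla X ((p : A) • S Y - φ (S Y)) - ((p : A) • S (nabla X Y) - φ (S (nabla X Y))) =
      (p : A) • (nabla X (S Y) - S (nabla X Y)) - φ (nabla X (S Y) - S (nabla X Y)) -
        g (S X) (S Y) • ξ := by
  have hnat : nabla X ((p : A) • S Y) = (p : A) • nabla X (S Y) :=
    map_natCast_smul (AddMonoidHom.ofMapSub (nabla X) (hnablaSub X)) A A p (S Y)
  rw [hnablaSub, hnat, nabla_phi_shape_eq nabla g φ S ξ η hη hSsym hSξ hGauss, map_sub]
  module

end

theorem quadratic_hypersurface_curvature_xi_general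
    {A V : Type*} [CommRing A] [AddCommGroup V] [Module A V]
    (g : V →ₗ[A] V →ₗ[A] A)
    (hgsym : ∀ X Y, g X Y = g Y X)
    (bracket : V → V → V)
    (nabla : V → V → V)
    (hnablaSub : ∀ X Y Z, nabla X (Y - Z) = nabla X Y - nabla X Z)
    (htorsionfree : ∀ X Y, nabla X Y - nabla Y X = bracket X Y)
    (φ : V →ₗ[A] V) (ξ : V) (η : V → A) (p : ℕ)
    (hη : ∀ X, η X = g X ξ)
    (S : V →ₗ[A] V)
    (hSsym : ∀ X Y, g (S X) Y = g X (S Y))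
    (hSξ : S ξ = 0)
    (hnablaXi : ∀ X, nabla X ξ = (p : A) • S X - φ (S X))
    (hGauss : ∀ X Y, nabla X (φ Y) - φ (nabla X Y) = η Y • S X + g (S X) Y • ξ)
    (R : V → V → V → V)
    (hR : ∀ X Y Z, R X Y Z =
      nabla X (nabla Y Z) - nabla Y (nabla X Z) - nabla (bracket X Y) Z)
    (nablaS : V → V → V)
    (hnablaS : ∀ X Y, nablaS X Y = nabla X (S Y) - S (nabla X Y)) :
    (∀ X Y, R X Y ξ =
      (p : A) • (nablaS X Y - nablaS Y X) - φ (nablaS X Y - nablaS Y X)) ∧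
    ((∀ X Y, nablaS X Y = 0) → ∀ X Y, R X Y ξ = 0) := by
  have hcurv : ∀ X Y, R X Y ξ =
      (p : A) • (nablaS X Y - nablaS Y X) - φ (nablaS X Y - nablaS Y X) := by
    intro X Y
    rw [curvature_apply_eq_of_nabla_eq nabla bracket R htorsionfree hR
      ((p : A) • S - φ ∘ₗ S).toAddMonoidHom ξ hnablaXi]
    simp only [LinearMap.toAddMonoidHom_coe, LinearMap.sub_apply, LinearMap.smul_apply,
      LinearMap.comp_apply]
    rw [nabla_metallic_shape_sub_eq nabla hnablaSub g φ S ξ η p hη hSsym hSξ hGauss,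
      nabla_metallic_shape_sub_eq nabla hnablaSub g φ S ξ η p hη hSsym hSξ hGauss,
      ← hnablaS, ← hnablaS, hgsym (S Y), map_sub]
    module
  refine ⟨hcurv, fun hparallel X Y => ?_⟩
  rw [hcurv, hparallel, hparallel, sub_zero, map_zero, smul_zero, sub_zero]

/-- Let `(M^n, g, ∇, φ, ξ)` be a quadratic metric φ-hypersurface of a
locally metallic Riemannian manifold, with `∇_X ξ = pAX − φAX`, `Aξ = 0` and
`(∇_X φ)Y = η(Y)AX + g(AX,Y)ξ` for the shape operator `A`. Then the Riemannian curvature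
`R(X,Y)Z = ∇_X∇_Y Z − ∇_Y∇_X Z − ∇_{[X,Y]}Z` satisfies
`R(X,Y)ξ = p((∇_X A)Y − (∇_Y A)X) − φ((∇_X A)Y − (∇_Y A)X)`, where
`(∇_X A)Y = ∇_X(AY) − A(∇_X Y)`. In particular, if the second fundamental form is
parallel (`∇A = 0`), then `R(X,Y)ξ = 0`. -/
theorem quadratic_hypersurface_curvature_xi
    {A V : Type*} [CommRing A] [AddCommGroup V] [Module A V]
    (g : V →ₗ[A] V →ₗ[A] A)
    (hgsym : ∀ X Y, g X Y = g Y X)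
    (D : V → A → A)
    (bracket : V → V → V)
    (nabla : V → V → V)
    (hnablaAdd : ∀ X Y Z, nabla X (Y + Z) = nabla X Y + nabla X Z)
    (hnablaSub : ∀ X Y Z, nabla X (Y - Z) = nabla X Y - nabla X Z)
    (hLeibniz : ∀ X (c : A) Y, nabla X (c • Y) = D X c • Y + c • nabla X Y)
    (htorsionfree : ∀ X Y, nabla X Y - nabla Y X = bracket X Y)
    (φ : V →ₗ[A] V) (ξ : V) (η : V → A) (p : ℕ) (hp : 0 < p)
    (hη : ∀ X, η X = g X ξ)
    (hφξ : φ ξ = 0) (hηξ : η ξ = 1)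
    (hφ2 : ∀ X, φ (φ X) = (p : A) • φ X + (X - η X • ξ))
    (hφsym : ∀ X Y, g (φ X) Y = g X (φ Y))
    (S : V →ₗ[A] V)
    (hSsym : ∀ X Y, g (S X) Y = g X (S Y))
    (hSξ : S ξ = 0)
    (hnablaXi : ∀ X, nabla X ξ = (p : A) • S X - φ (S X))
    (hGauss : ∀ X Y, nabla X (φ Y) - φ (nabla X Y) = η Y • S X + g (S X) Y • ξ)
    (R : V → V → V → V)
    (hR : ∀ X Y Z, R X Y Z =
      nabla X (nabla Y Z) - nabla Y (nabla X Z) - nabla (bracket X Y) Z)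
    (nablaS : V → V → V)
    (hnablaS : ∀ X Y, nablaS X Y = nabla X (S Y) - S (nabla X Y)) :
    (∀ X Y, R X Y ξ =
      (p : A) • (nablaS X Y - nablaS Y X) - φ (nablaS X Y - nablaS Y X)) ∧
    ((∀ X Y, nablaS X Y = 0) → ∀ X Y, R X Y ξ = 0) :=
  quadratic_hypersurface_curvature_xi_general g hgsym bracket nabla hnablaSub htorsionfree φ ξ η p
    hη S hSsym hSξ hnablaXi hGauss R hR nablaS hnablaS
end
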